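/- arXiv:0911.3952 — 3 statements merged into one kernel-verified Lean document; each statement's English description precedes it below -/
import Mathlib

section
/- Let $u^*:\mathbf{R}^n \to \mathbf{R}\cup\{+\infty\}$ be a convex function with $Z^* = \{u^* \le 0\}$ satisfying $B_1 \subset Z^* \subset \overline{B_n}$ and $u^* = 0$ on $\partial Z^*$. Then for all $t \in (0,1)$, the Lebesgue measure of the image of $tZ^*$ under the subdifferential map satisfies $\mathcal{L}^n(\partial u^*(tZ^*)) \le \frac{C(n)}{(1-t)^n} \frac{|\inf_{Z^*} u^*|^n}{\mathcal{L}^n(Z^*)}$ for some constant $C(n)$ depending only on the dimension $n$. -/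
/-!
A subgradient `p` of `u` at `q = t • z` with `z ∈ Z` satisfies `(1 - t) * ‖p‖ ≤ -inf_Z u`: by
convexity the ball of radius `1 - t` around `q` lies in `Z`, where `u ≤ 0`, and testing the
supporting hyperplane at `q + (1 - t) • p / ‖p‖` gives the bound. So `∂u(tZ)` lies in a ball of
radius `|inf_Z u| / (1 - t)`, and the factor `1 / 𝓛(Z)` is paid for by `𝓛(Z) ≤ 𝓛(B_n)`.
-/

open MeasureTheory Set Pointwise Metric

section Subgradient

variable {E : Type*} [NormedAddCommGroup E] [InnerProductSpace ℝ E]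

theorem mul_norm_le_sub_of_subgradient {u : E → ℝ} {p q : E} {r c : ℝ}
    (hp : ∀ x, u q + inner ℝ p (x - q) ≤ u x) (hr : 0 ≤ r)
    (hc : ∀ x ∈ closedBall q r, u x ≤ c) : r * ‖p‖ ≤ c - u q := by
  rcases eq_or_ne p 0 with rfl | hp0
  · simpa using hc q (mem_closedBall_self hr)
  have hnorm : 0 < ‖p‖ := norm_pos_iff.mpr hp0
  set x := q + (r / ‖p‖) • p
  have hx : x ∈ closedBall q r := by
    simp [x, norm_smul, abs_of_nonneg hr, hnorm.ne']
  have hpx : inner ℝ p (x - q) = r * ‖p‖ := by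
    rw [add_sub_cancel_left, real_inner_smul_right, real_inner_self_eq_norm_sq]
    field_simp
  linarith [hp x, hc x hx]

theorem Convex.closedBall_smul_subset {Z : Set E} (hZ : Convex ℝ Z) (hB : closedBall 0 1 ⊆ Z)
    {z : E} (hz : z ∈ Z) {t : ℝ} (ht : t ∈ Ico (0 : ℝ) 1) :
    closedBall (t • z) (1 - t) ⊆ Z := by
  intro x hx
  have hs : 0 < 1 - t := sub_pos.mpr ht.2
  set e := (1 - t)⁻¹ • (x - t • z)
  have he : e ∈ closedBall 0 1 := by
    rw [mem_closedBall, dist_zero_right, norm_smul, norm_inv, Real.norm_of_nonneg hs.le,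
      ← dist_eq_norm]
    exact inv_mul_le_one_of_le₀ hx hs.le
  have hx_eq : t • z + (1 - t) • e = x := by
    simp [e, smul_smul, hs.ne']
  exact hx_eq ▸ hZ hz (hB he) ht.1 hs.le (by ring)

theorem norm_subgradient_le {u : E → ℝ} {Z : Set E} (hZ : Convex ℝ Z)
    (hB : closedBall 0 1 ⊆ Z) (huZ : ∀ x ∈ Z, u x ≤ 0) {m : ℝ} (hm : ∀ x ∈ Z, m ≤ u x)
    {t : ℝ} (ht : t ∈ Ico (0 : ℝ) 1) {q p : E} (hq : q ∈ t • Z)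
    (hp : ∀ x, u q + inner ℝ p (x - q) ≤ u x) : ‖p‖ ≤ -m / (1 - t) := by
  obtain ⟨z, hz, rfl⟩ := hq
  have hs : 0 < 1 - t := sub_pos.mpr ht.2
  have hqZ : t • z ∈ Z := hZ.closedBall_smul_subset hB hz ht (mem_closedBall_self hs.le)
  have := mul_norm_le_sub_of_subgradient hp hs.le
    fun x hx ↦ huZ x (hZ.closedBall_smul_subset hB hz ht hx)
  rw [le_div_iff₀ hs]
  linarith [hm _ hqZ]

theorem iUnion_subgradients_subset_closedBall {u : E → ℝ} {Z : Set E} (hZ : Convex ℝ Z)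
    (hB : closedBall 0 1 ⊆ Z) (huZ : ∀ x ∈ Z, u x ≤ 0) {m : ℝ} (hm : ∀ x ∈ Z, m ≤ u x)
    {t : ℝ} (ht : t ∈ Ico (0 : ℝ) 1) :
    (⋃ q ∈ t • Z, {p : E | ∀ x, u q + inner ℝ p (x - q) ≤ u x})
      ⊆ closedBall 0 (-m / (1 - t)) := by
  simp only [iUnion_subset_iff]
  intro q hq p hp
  rw [mem_closedBall, dist_zero_right]
  exact norm_subgradient_le hZ hB huZ hm ht hq hp

end Subgradient

section Volume

variable {E : Type*} [NormedAddCommGroup E] [InnerProductSpace ℝ E] [FiniteDimensional ℝ E]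
  [MeasurableSpace E] [BorelSpace E] (μ : Measure E) [μ.IsAddHaarMeasure]

theorem measureReal_closedBall_le_div {Z : Set E} {R r : ℝ} (hB : ball 0 1 ⊆ Z)
    (hZ : Z ⊆ closedBall 0 R) (hr : 0 ≤ r) :
    μ.real (closedBall 0 r)
      ≤ μ.real (ball (0 : E) 1) ^ 2 * R ^ Module.finrank ℝ E * r ^ Module.finrank ℝ E
        / μ.real Z := by
  have h0 : (0 : E) ∈ Z := hB (mem_ball_self one_pos)
  have hR : 0 ≤ R := by simpa using hZ h0
  have hZpos : 0 < μ.real Z :=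
    ENNReal.toReal_pos ((measure_ball_pos μ _ one_pos).trans_le (measure_mono hB)).ne'
      (measure_mono hZ |>.trans_lt measure_closedBall_lt_top).ne
  have hZR : μ.real Z ≤ R ^ Module.finrank ℝ E * μ.real (ball (0 : E) 1) :=
    Measure.addHaar_real_closedBall μ (0 : E) hR ▸
      measureReal_mono hZ measure_closedBall_lt_top.ne
  rw [Measure.addHaar_real_closedBall μ _ hr, le_div_iff₀ hZpos]
  calc r ^ Module.finrank ℝ E * μ.real (ball 0 1) * μ.real Z
      ≤ r ^ Module.finrank ℝ E * μ.real (ball 0 1)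
        * (R ^ Module.finrank ℝ E * μ.real (ball (0 : E) 1)) := by
        gcongr
    _ = _ := by ring

end Volume

/-- Upper bound on Dirichlet solutions to Monge–Ampère inequalities. -/
theorem stmt_1 (n : ℕ) :
    ∃ C : ℝ, 0 < C ∧
    ∀ (u : EuclideanSpace ℝ (Fin n) → ℝ), ConvexOn ℝ Set.univ u →
    ∀ Z : Set (EuclideanSpace ℝ (Fin n)), Z = {x | u x ≤ 0} →
      Metric.ball 0 1 ⊆ Z → Z ⊆ Metric.closedBall 0 n →
      (∀ x ∈ frontier Z, u x = 0) →
      ∀ t ∈ Set.Ioo (0 : ℝ) 1,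
      volume (⋃ q ∈ t • Z,
          {p : EuclideanSpace ℝ (Fin n) | ∀ x, u q + (inner ℝ p (x - q) : ℝ) ≤ u x})
        ≤ ENNReal.ofReal (C / (1 - t) ^ n * |sInf (u '' Z)| ^ n / (volume Z).toReal) := by
  set b := volume.real (ball (0 : EuclideanSpace ℝ (Fin n)) 1)
  have hb : 0 < b := ENNReal.toReal_pos (measure_ball_pos _ _ one_pos).ne' measure_ball_lt_top.ne
  refine ⟨b ^ 2 * n ^ n, mul_pos (pow_pos hb 2) (mod_cast Nat.pow_self_pos), ?_⟩
  rintro u hu Z rfl hB hZn - t ht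
  have hcont : Continuous u := continuousOn_univ.mp (hu.continuousOn isOpen_univ)
  have hclosed : IsClosed {x | u x ≤ 0} := isClosed_le hcont continuous_const
  have hB' : closedBall 0 1 ⊆ {x | u x ≤ 0} := by
    rw [← closure_ball 0 one_ne_zero]
    exact hclosed.closure_subset_iff.mpr hB
  set m := sInf (u '' {x | u x ≤ 0})
  have hm (x) (hx : x ∈ {x | u x ≤ 0}) : m ≤ u x :=
    csInf_le (((isCompact_closedBall 0 _).of_isClosed_subset hclosed hZn).bddBelow_image
      hcont.continuousOn) (mem_image_of_mem u hx)
  have hm0 : m ≤ 0 := (hm 0 (hB (mem_ball_self one_pos))).trans (hB (mem_ball_self one_pos))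
  have hr : 0 ≤ -m / (1 - t) := div_nonneg (neg_nonneg.mpr hm0) (sub_pos.mpr ht.2).le
  calc _ ≤ volume (closedBall (0 : EuclideanSpace ℝ (Fin n)) (-m / (1 - t))) :=
        measure_mono <| iUnion_subgradients_subset_closedBall (by simpa using hu.convex_le 0)
          hB' (fun _ ↦ id) hm ⟨ht.1.le, ht.2⟩
    _ = ENNReal.ofReal (volume.real (closedBall 0 (-m / (1 - t)))) :=
        (ofReal_measureReal measure_closedBall_lt_top.ne).symm
    _ ≤ _ := by
        gcongr
        convert measureReal_closedBall_le_div volume hB hZn hr using 1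
        rw [finrank_euclideanSpace_fin, abs_of_nonpos hm0, div_pow]
        simp only [b, measureReal_def]
        ring
end

section
/- Let $Z$ be a convex set in $\mathbf{R}^n = \mathbf{R}^{n'} \times \mathbf{R}^{n''}$, let $\pi''$ denote projection onto the second factor, and let $Z' = (\pi'')^{-1}(\bar x'') \cap Z$ be the slice of $Z$ over some point $\bar x'' \in \pi''(Z)$. Then there is a constant $C(n)$ depending only on $n = n' + n''$ such that $C(n)\,\mathcal{L}^n(Z) \ge \mathcal{H}^{n'}(Z')\,\mathcal{H}^{n''}(\pi''(Z))$. -/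
open MeasureTheory Set
open scoped ENNReal

/-!
If `(x', y') ∈ Z`, convexity puts the homothetic copy, with centre `x'` and ratio `1/2`, of the
slice `Z'` over `x̄''` inside the slice of `Z` over the midpoint of `x̄''` and `y'`. Hence all
slices of `Z` over the set `x̄'' + (π''(Z) - x̄'') / 2`, whose measure is `2^{-n''}` times that of
`π''(Z)`, have measure at least `2^{-n'}` times that of `Z'`, and Fubini gives the inequality
with `C = 2^n` for any Haar measures on the factors. Hausdorff measure of the full dimension is
such a Haar measure, hence a constant multiple of Lebesgue measure.
-/

theorem MeasureTheory.Measure.mul_measure_le_prod_apply_of_forall_le_measure_slice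
    {α β : Type*} [MeasurableSpace α] [MeasurableSpace β] {μ : Measure α} {ν : Measure β}
    [SFinite μ] [SFinite ν] {s : Set (α × β)} {t : Set β} {c : ℝ≥0∞}
    (h : ∀ y ∈ t, c ≤ μ ((·, y) ⁻¹' s)) :
    c * ν t ≤ μ.prod ν s := by
  set T := toMeasurable (μ.prod ν) s
  have hT : MeasurableSet T := measurableSet_toMeasurable _ _
  have hle : t ⊆ {y | c ≤ μ ((·, y) ⁻¹' T)} := fun y hy =>
    (h y hy).trans (measure_mono (preimage_mono (subset_toMeasurable _ _)))
  calc c * ν t ≤ c * ν {y | c ≤ μ ((·, y) ⁻¹' T)} := by gcongr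
    _ ≤ ∫⁻ y, μ ((·, y) ⁻¹' T) ∂ν := mul_meas_ge_le_lintegral (measurable_measure_prodMk_right hT) c
    _ = μ.prod ν T := (Measure.prod_apply_symm hT).symm
    _ = μ.prod ν s := measure_toMeasurable s

theorem Convex.homothety_image_slice_subset {E F : Type*} [AddCommGroup E] [Module ℝ E]
    [AddCommGroup F] [Module ℝ F] {Z : Set (E × F)} (hZ : Convex ℝ Z) {p : E × F} (hp : p ∈ Z)
    {t : ℝ} (ht : t ∈ Icc (0 : ℝ) 1) (y : F) :
    AffineMap.homothety p.1 t '' ((·, y) ⁻¹' Z) ⊆ (·, AffineMap.homothety p.2 t y) ⁻¹' Z := by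
  rintro _ ⟨x, hx, rfl⟩
  exact hZ.lineMap_mem hp hx ht

theorem Convex.measure_slice_mul_measure_image_snd_le {E F : Type*}
    [NormedAddCommGroup E] [NormedSpace ℝ E] [FiniteDimensional ℝ E] [MeasurableSpace E]
    [BorelSpace E] [NormedAddCommGroup F] [NormedSpace ℝ F] [FiniteDimensional ℝ F]
    [MeasurableSpace F] [BorelSpace F] (μ : Measure E) [μ.IsAddHaarMeasure]
    (ν : Measure F) [ν.IsAddHaarMeasure] {Z : Set (E × F)} (hZ : Convex ℝ Z) (y : F) :
    μ ((·, y) ⁻¹' Z) * ν (Prod.snd '' Z)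
      ≤ 2 ^ (Module.finrank ℝ E + Module.finrank ℝ F) * μ.prod ν Z := by
  have ofReal_half_pow : ∀ d : ℕ, ENNReal.ofReal |(2⁻¹ : ℝ) ^ d| = 2⁻¹ ^ d := fun d => by
    rw [abs_of_nonneg (by positivity), ENNReal.ofReal_pow (by norm_num), ENNReal.ofReal_inv_of_pos
      two_pos, ENNReal.ofReal_ofNat]
  have hslice : ∀ y' ∈ AffineMap.homothety y (2⁻¹ : ℝ) '' (Prod.snd '' Z),
      2⁻¹ ^ Module.finrank ℝ E * μ ((·, y) ⁻¹' Z) ≤ μ ((·, y') ⁻¹' Z) := by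
    rintro _ ⟨_, ⟨p, hp, rfl⟩, rfl⟩
    have hmid : AffineMap.homothety y (2⁻¹ : ℝ) p.2 = AffineMap.homothety p.2 (2⁻¹ : ℝ) y := by
      rw [homothety_inv_two, homothety_inv_two, midpoint_comm]
    rw [hmid, ← ofReal_half_pow, ← Measure.addHaar_image_homothety μ p.1]
    exact measure_mono (hZ.homothety_image_slice_subset hp (by norm_num) y)
  have hprod := Measure.mul_measure_le_prod_apply_of_forall_le_measure_slice (ν := ν) hslice
  rw [Measure.addHaar_image_homothety, ofReal_half_pow] at hprod
  have hcancel : ∀ d : ℕ, (2 : ℝ≥0∞) ^ d * 2⁻¹ ^ d = 1 := fun d => by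
    rw [← mul_pow, ENNReal.mul_inv_cancel two_ne_zero ENNReal.ofNat_ne_top, one_pow]
  calc μ ((·, y) ⁻¹' Z) * ν (Prod.snd '' Z)
      = (2 ^ Module.finrank ℝ E * 2⁻¹ ^ Module.finrank ℝ E) *
          (2 ^ Module.finrank ℝ F * 2⁻¹ ^ Module.finrank ℝ F) *
          (μ ((·, y) ⁻¹' Z) * ν (Prod.snd '' Z)) := by
        rw [hcancel, hcancel, one_mul, one_mul]
    _ = 2 ^ (Module.finrank ℝ E + Module.finrank ℝ F) * (2⁻¹ ^ Module.finrank ℝ E *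
          μ ((·, y) ⁻¹' Z) * (2⁻¹ ^ Module.finrank ℝ F * ν (Prod.snd '' Z))) := by
        ring
    _ ≤ _ := mul_le_mul_right hprod _

instance isAddHaarMeasure_hausdorffMeasure_euclideanSpace (n : ℕ) :
    (μH[n] : Measure (EuclideanSpace ℝ (Fin n))).IsAddHaarMeasure := by
  simpa using isAddHaarMeasure_hausdorffMeasure (E := EuclideanSpace ℝ (Fin n))

theorem hausdorffMeasure_sep_snd_eq_preimage {X Y : Type*} [EMetricSpace X] [EMetricSpace Y]
    [MeasurableSpace X] [BorelSpace X] [MeasurableSpace (X × Y)] [BorelSpace (X × Y)]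
    {d : ℝ} (hd : 0 ≤ d) (Z : Set (X × Y)) (y : Y) :
    μH[d] {z ∈ Z | z.2 = y} = μH[d] ((·, y) ⁻¹' Z) := by
  have hiso : Isometry fun x : X => (x, y) := fun a b => by simp [Prod.edist_eq]
  rw [← hiso.hausdorffMeasure_image (Or.inl hd), image_preimage_eq_inter_range]
  congr 1
  ext ⟨x, y'⟩
  simp [eq_comm]

/-- Volume of a convex set controls (slice) × (orthogonal projection). -/
theorem stmt_2 (n' n'' : ℕ) :
    ∃ C : ℝ, 0 < C ∧
    ∀ Z : Set (EuclideanSpace ℝ (Fin n') × EuclideanSpace ℝ (Fin n'')),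
      Convex ℝ Z →
      ∀ x'' ∈ Prod.snd '' Z,
        μH[(n' : ℝ)] {z ∈ Z | z.2 = x''} * μH[(n'' : ℝ)] (Prod.snd '' Z)
          ≤ ENNReal.ofReal C * volume Z := by
  set μ : Measure (EuclideanSpace ℝ (Fin n')) := μH[n']
  set ν : Measure (EuclideanSpace ℝ (Fin n'')) := μH[n'']
  set c := (μ.prod ν).addHaarScalarFactor (volume.prod volume)
  have hc : μ.prod ν = c • volume := by
    rw [Measure.volume_eq_prod]
    exact Measure.isAddLeftInvariant_eq_smul _ _
  have hc_pos : 0 < c := Measure.addHaarScalarFactor_pos_of_isAddHaarMeasure _ _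
  refine ⟨2 ^ (n' + n'') * c, by positivity, fun Z hZ x'' _ => ?_⟩
  rw [hausdorffMeasure_sep_snd_eq_preimage (Nat.cast_nonneg n')]
  calc μ ((·, x'') ⁻¹' Z) * ν (Prod.snd '' Z) ≤ 2 ^ (n' + n'') * μ.prod ν Z := by
        simpa using hZ.measure_slice_mul_measure_image_snd_le μ ν x''
    _ = ENNReal.ofReal (2 ^ (n' + n'') * c) * volume Z := by
        rw [hc, Measure.coe_nnreal_smul_apply, ← mul_assoc, ENNReal.ofReal_mul (by positivity)]
        simp
end

section
/- For every compact convex set $S \subset \mathbf{R}^n$ with nonempty interior, there exists an invertible affine transformation $L : \mathbf{R}^n \to \mathbf{R}^n$ such that $\overline{B_1} \subset L^{-1}(S) \subset \overline{B_n}$, where $B_r$ is the ball of radius $r$ centered at the origin. -/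
/-!
By compactness there is an affine map `x ↦ A x + v` sending `S` into the closed unit ball with
`|det A|` maximal (a ball inside `S` bounds the linear parts); the unit ball is then a
minimal-volume ellipsoid around the image `T`. If some `z` with `‖z‖ ≤ 1 / n` were missing from
`T`, a hyperplane would separate it, putting `T` inside a cap `{‖y‖ ≤ 1, ⟪e, y⟫ ≤ β}` with
`β < 1 / n`. Such a cap fits in an ellipsoid through the pole `-e`, slightly shorter along `e` and
wider across it, whose volume exceeds that of the ball: this contradicts maximality. Hence
`closedBall 0 (1 / n) ⊆ T ⊆ closedBall 0 1`, and scaling by `n` gives the theorem.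
-/

open Metric Set Module RealInnerProductSpace
open scoped Pointwise

lemma quadratic_nonpos_of_nonpos_of_nonpos {P Q R l u t : ℝ} (hP : 0 ≤ P) (hl : l ≤ t)
    (hu : t ≤ u) (h_l : P * l ^ 2 + Q * l + R ≤ 0) (h_u : P * u ^ 2 + Q * u + R ≤ 0) :
    P * t ^ 2 + Q * t + R ≤ 0 := by
  have hscaled : (u - l) * (P * t ^ 2 + Q * t + R) ≤ 0 := by
    nlinarith [mul_nonneg (sub_nonneg.2 hu) (neg_nonneg.2 h_l),
      mul_nonneg (sub_nonneg.2 hl) (neg_nonneg.2 h_u),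
      mul_nonneg (mul_nonneg (mul_nonneg hP (sub_nonneg.2 hu)) (sub_nonneg.2 hl))
        (sub_nonneg.2 (hl.trans hu))]
  rcases (hl.trans hu).eq_or_lt with rfl | hlu
  · rwa [le_antisymm hl hu] at h_l
  · exact nonpos_of_mul_nonpos_right hscaled (sub_pos.2 hlu)

/-- `a` and `1 / √p` are the semi-axes, along and across the axis `t`, of an ellipsoid through the
pole `t = -1` of the unit ball that contains the cap `{t ≤ β}`; `a ^ 2 < p ^ (n - 1)` says that its
volume exceeds that of the ball. -/
lemma exists_cap_ellipsoid_params {n : ℕ} (hn : 1 ≤ n) {β : ℝ} (hβ0 : 0 ≤ β)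
    (hβ : n * β < 1) :
    ∃ a p : ℝ, 0 < a ∧ 0 < p ∧
      (∀ t : ℝ, -1 ≤ t → t ≤ β → ((t + (1 - a)) / a) ^ 2 + (1 - t ^ 2) * p ≤ 1) ∧
      a ^ 2 < p ^ (n - 1) := by
  have hn1 : (1 : ℝ) ≤ n := by exact_mod_cast hn
  have hβ1 : β < 1 := by nlinarith
  obtain ⟨ε, hε, hε0⟩ : ∃ ε : ℝ, ε * (4 * n + 1) = 1 - n * β ∧ 0 < ε :=
    ⟨(1 - n * β) / (4 * n + 1), div_mul_cancel₀ _ (by positivity),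
      div_pos (by linarith) (by positivity)⟩
  have hε5 : 5 * ε ≤ 1 - β := by nlinarith
  obtain ⟨D, hD, hD0⟩ : ∃ D : ℝ, D * (1 - β) = 2 * β + 4 * ε ∧ 0 ≤ D :=
    ⟨(2 * β + 4 * ε) / (1 - β), div_mul_cancel₀ _ (by linarith),
      div_nonneg (by positivity) (by linarith)⟩
  have hDε0 : 0 ≤ D * ε := mul_nonneg hD0 hε0.le
  have hDε : D * ε ≤ 14 / 25 := by nlinarith [sq_nonneg (1 - β), sq_nonneg ε]
  refine ⟨1 - ε, 1 - D * ε, by linarith, by linarith, fun t ht₁ ht₂ => ?_, ?_⟩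
  · -- multiplied by `a ^ 2`, the inequality is a convex quadratic in `t`, with a root at `t = -1`
    have hquad : (1 - (1 - D * ε) * (1 - ε) ^ 2) * t ^ 2 + (2 * ε) * t
        + (ε ^ 2 + (1 - D * ε) * (1 - ε) ^ 2 - (1 - ε) ^ 2) ≤ 0 := by
      refine quadratic_nonpos_of_nonpos_of_nonpos (by nlinarith) ht₁ ht₂ (by nlinarith) ?_
      have hβ_root : (1 - (1 - D * ε) * (1 - ε) ^ 2) * β ^ 2 + (2 * ε) * β
          + (ε ^ 2 + (1 - D * ε) * (1 - ε) ^ 2 - (1 - ε) ^ 2)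
          = -((1 + β) * (1 - β - 2 * ε) * (ε ^ 2 * (3 - 2 * ε))) := by
        linear_combination (-ε * (1 + β) * (1 - ε) ^ 2) * hD
      rw [hβ_root, neg_nonpos]
      exact mul_nonneg (mul_nonneg (by linarith) (by linarith)) (by nlinarith)
    rw [div_pow, div_add' _ _ _ (by nlinarith), div_le_one (by nlinarith)]
    linarith
  · -- Bernoulli gives `p ^ (n - 1) ≥ 1 - (n - 1) D ε`, and the choice of `ε` makes
    -- `(n - 1) D < 2 - ε`
    have hbernoulli : 1 + ((n - 1 : ℕ) : ℝ) * (-(D * ε)) ≤ (1 + -(D * ε)) ^ (n - 1) :=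
      one_add_mul_le_pow (by linarith) (n - 1)
    rw [Nat.cast_sub hn, Nat.cast_one, ← sub_eq_add_neg] at hbernoulli
    nlinarith [mul_pos hε0 hε0, mul_nonneg hβ0 hε0.le]

section AxialStretch

variable {E : Type*} [NormedAddCommGroup E] [InnerProductSpace ℝ E]

lemma finrank_pos_of_norm_eq_one [FiniteDimensional ℝ E] {e : E} (he : ‖e‖ = 1) :
    0 < finrank ℝ E :=
  finrank_pos_iff_exists_ne_zero.2 ⟨e, norm_ne_zero_iff.1 (by simp [he])⟩

/-- For a unit vector `e`: multiplication by `c` along `e` and by `s` on its orthogonal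
complement. -/
noncomputable def axialStretch (e : E) (c s : ℝ) : E →L[ℝ] E :=
  s • ContinuousLinearMap.id ℝ E + (c - s) • (innerSL ℝ e).smulRight e

lemma axialStretch_apply (e : E) (c s : ℝ) (y : E) :
    axialStretch e c s y = (c * ⟪e, y⟫) • e + s • (y - ⟪e, y⟫ • e) := by
  simp only [axialStretch, add_apply, smul_apply,
    ContinuousLinearMap.id_apply, ContinuousLinearMap.smulRight_apply, innerSL_apply_apply]
  module

lemma det_axialStretch [FiniteDimensional ℝ E] {e : E} (he : ‖e‖ = 1) (c s : ℝ) :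
    (axialStretch e c s).det = c * s ^ (finrank ℝ E - 1) := by
  classical
  have hcard : finrank ℝ E = Fintype.card (Option (Fin (finrank ℝ E - 1))) := by
    have := finrank_pos_of_norm_eq_one he
    simp only [Fintype.card_option, Fintype.card_fin]
    omega
  obtain ⟨b, hb⟩ := Orthonormal.exists_orthonormalBasis_extension_of_card_eq hcard
    (v := fun _ => e) (s := {none}) (orthonormal_subsingleton_iff.2 fun _ => he)
  have hb_none : b none = e := hb none rfl
  let d : Option (Fin (finrank ℝ E - 1)) → ℝ := fun i => i.elim c fun _ => s
  have hdiag : (axialStretch e c s : E →ₗ[ℝ] E) =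
      Matrix.toLin b.toBasis b.toBasis (Matrix.diagonal d) := by
    refine b.toBasis.ext fun i => ?_
    rw [Matrix.toLin_self]
    simp only [Matrix.diagonal_apply, ite_smul, zero_smul, Finset.sum_ite_eq', Finset.mem_univ,
      if_true]
    rcases i with _ | j
    · simp [axialStretch_apply, hb_none, he, d]
    · have : ⟪e, b (some j)⟫ = 0 := hb_none ▸ b.orthonormal.2 (by simp)
      simp [axialStretch_apply, this, d]
  rw [ContinuousLinearMap.det, hdiag, LinearMap.det_toLin, Matrix.det_diagonal, Fintype.prod_option]
  simp [d]

lemma norm_axialStretch_add_smul_sq {e : E} (he : ‖e‖ = 1) (c s d : ℝ) (y : E) :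
    ‖axialStretch e c s y + d • e‖ ^ 2 =
      (c * ⟪e, y⟫ + d) ^ 2 + s ^ 2 * (‖y‖ ^ 2 - ⟪e, y⟫ ^ 2) := by
  have hee : ⟪e, e⟫ = 1 := by rw [real_inner_self_eq_norm_sq, he, one_pow]
  have horth : ⟪e, y - ⟪e, y⟫ • e⟫ = 0 := by
    rw [inner_sub_right, real_inner_smul_right, hee, mul_one, sub_self]
  have hsplit :
      axialStretch e c s y + d • e = (c * ⟪e, y⟫ + d) • e + s • (y - ⟪e, y⟫ • e) := by
    rw [axialStretch_apply]; module
  have hperp : ‖y - ⟪e, y⟫ • e‖ ^ 2 = ‖y‖ ^ 2 - ⟪e, y⟫ ^ 2 := by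
    rw [norm_sub_sq_real, real_inner_smul_right, real_inner_comm, norm_smul, he, mul_one,
      Real.norm_eq_abs, sq_abs]
    ring
  rw [hsplit, norm_add_sq_real, real_inner_smul_left, real_inner_smul_right, horth, norm_smul,
    norm_smul, he, mul_pow, mul_pow, hperp]
  simp only [Real.norm_eq_abs, sq_abs]
  ring

end AxialStretch

section MinimalEllipsoid

variable {E : Type*} [NormedAddCommGroup E] [InnerProductSpace ℝ E]

theorem exists_unit_inner_le_lt_of_notMem [CompleteSpace E] {T : Set E} (hconv : Convex ℝ T)
    (hclosed : IsClosed T) (hne : T.Nonempty) {z : E} (hz : z ∉ T) :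
    ∃ e : E, ‖e‖ = 1 ∧ ∃ β : ℝ, (∀ y ∈ T, ⟪e, y⟫ ≤ β) ∧ β < ⟪e, z⟫ := by
  obtain ⟨f, u, hfT, hfz⟩ := geometric_hahn_banach_closed_point hconv hclosed hz
  set w := (InnerProductSpace.toDual ℝ E).symm f
  have hw : ∀ y, ⟪w, y⟫ = f y := fun y => InnerProductSpace.toDual_symm_apply
  have hw0 : w ≠ 0 := by
    rintro h
    obtain ⟨y, hy⟩ := hne
    have := (hfT y hy).trans hfz
    rw [← hw, ← hw, h, inner_zero_left, inner_zero_left] at this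
    exact lt_irrefl 0 this
  have hwn : 0 < ‖w‖ := norm_pos_iff.2 hw0
  refine ⟨‖w‖⁻¹ • w, by rw [norm_smul, norm_inv, norm_norm, inv_mul_cancel₀ hwn.ne'],
    ‖w‖⁻¹ * u, fun y hy => ?_, ?_⟩
  · rw [real_inner_smul_left, hw]
    exact mul_le_mul_of_nonneg_left (hfT y hy).le (by positivity)
  · rw [real_inner_smul_left, hw]
    exact mul_lt_mul_of_pos_left hfz (by positivity)

variable [FiniteDimensional ℝ E]

theorem exists_det_gt_one_mapsTo_cap {e : E} (he : ‖e‖ = 1) {β : ℝ}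
    (hβ : finrank ℝ E * β < 1) :
    ∃ (A : E →L[ℝ] E) (w : E), 1 < |A.det| ∧
      MapsTo (fun y => A y + w) (closedBall 0 1 ∩ {y | ⟪e, y⟫ ≤ β}) (closedBall 0 1) := by
  have hn : 1 ≤ finrank ℝ E := finrank_pos_of_norm_eq_one he
  obtain ⟨a, p, ha, hp, hcap, hvol⟩ :=
    exists_cap_ellipsoid_params hn (le_max_right β 0) (by
      rcases max_cases β 0 with ⟨h, _⟩ | ⟨h, _⟩ <;> rw [h] <;> simp [hβ])
  have hsp : √p ^ 2 = p := Real.sq_sqrt hp.le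
  refine ⟨axialStretch e a⁻¹ √p, ((1 - a) / a) • e, ?_, ?_⟩
  · have hpow : a < √p ^ (finrank ℝ E - 1) := by
      refine lt_of_pow_lt_pow_left₀ 2 (by positivity) ?_
      rwa [← pow_mul, mul_comm, pow_mul, hsp]
    rw [det_axialStretch he, abs_of_pos (by positivity), ← div_eq_inv_mul, one_lt_div ha]
    exact hpow
  · rintro y ⟨hy, hyβ⟩
    rw [mem_closedBall_zero_iff] at hy ⊢
    have ht : -1 ≤ ⟪e, y⟫ := by
      have := abs_real_inner_le_norm e y
      rw [he, one_mul] at this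
      linarith [(abs_le.1 this).1]
    have hcoef : a⁻¹ * ⟪e, y⟫ + (1 - a) / a = (⟪e, y⟫ + (1 - a)) / a := by field_simp
    have hsq : ‖axialStretch e a⁻¹ √p y + ((1 - a) / a) • e‖ ^ 2 ≤ 1 := by
      rw [norm_axialStretch_add_smul_sq he, hsp, hcoef]
      have := hcap _ ht (hyβ.trans (le_max_left β 0))
      nlinarith [pow_le_one₀ (n := 2) (norm_nonneg y) hy]
    exact (sq_le_one_iff₀ (norm_nonneg _)).1 hsq

theorem closedBall_inv_finrank_subset {T : Set E} (hconv : Convex ℝ T) (hclosed : IsClosed T)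
    (hne : T.Nonempty) (hT : T ⊆ closedBall 0 1)
    (hmin : ∀ (A : E →L[ℝ] E) (w : E),
      MapsTo (fun y => A y + w) T (closedBall 0 1) → |A.det| ≤ 1) :
    closedBall 0 (finrank ℝ E : ℝ)⁻¹ ⊆ T := by
  intro z hz
  by_contra hzT
  obtain ⟨e, he, β, hTβ, hβz⟩ := exists_unit_inner_le_lt_of_notMem hconv hclosed hne hzT
  have hn : (0 : ℝ) < finrank ℝ E := Nat.cast_pos.2 (finrank_pos_of_norm_eq_one he)
  have hβ : finrank ℝ E * β < 1 := by
    have hzn : ⟪e, z⟫ ≤ (finrank ℝ E : ℝ)⁻¹ :=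
      (real_inner_le_norm e z).trans (by rw [he, one_mul]; exact mem_closedBall_zero_iff.1 hz)
    calc finrank ℝ E * β < finrank ℝ E * (finrank ℝ E : ℝ)⁻¹ :=
          mul_lt_mul_of_pos_left (hβz.trans_le hzn) hn
      _ = 1 := mul_inv_cancel₀ hn.ne'
  obtain ⟨A, w, hdet, hcap⟩ := exists_det_gt_one_mapsTo_cap he hβ
  exact (hmin A w fun y hy => hcap ⟨hT hy, hTβ y hy⟩).not_gt hdet

end MinimalEllipsoid

section MaxDet

variable {E F : Type*} [NormedAddCommGroup E] [NormedSpace ℝ E] [NormedAddCommGroup F]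
  [NormedSpace ℝ F]

lemma isClosed_setOf_mapsTo_closedBall (S : Set E) :
    IsClosed {q : (E →L[ℝ] F) × F | MapsTo (fun x => q.1 x + q.2) S (closedBall 0 1)} := by
  simp only [MapsTo, ofPred_forall]
  exact isClosed_biInter fun x _ => isClosed_closedBall.preimage
    ((ContinuousLinearMap.apply ℝ F x).continuous.comp continuous_fst |>.add continuous_snd)

lemma opNorm_le_of_mapsTo_closedBall {A : E →L[ℝ] F} {v : F} {x₀ : E} {ρ : ℝ} (hρ : 0 < ρ)
    (h : MapsTo (fun x => A x + v) (closedBall x₀ ρ) (closedBall 0 1)) : ‖A‖ ≤ 2 / ρ := by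
  refine ContinuousLinearMap.opNorm_le_of_unit_norm (by positivity) fun x hx => ?_
  have h₁ := mem_closedBall_zero_iff.1
    (h (x := x₀ + ρ • x) (by simp [norm_smul, hx, abs_of_pos hρ]))
  have h₀ := mem_closedBall_zero_iff.1 (h (mem_closedBall_self hρ.le))
  have hdiff : A (ρ • x) = (A (x₀ + ρ • x) + v) - (A x₀ + v) := by simp
  rw [le_div_iff₀ hρ, mul_comm, ← abs_of_pos hρ, ← Real.norm_eq_abs, ← norm_smul, ← map_smul,
    hdiff]
  linarith [norm_sub_le (A (x₀ + ρ • x) + v) (A x₀ + v)]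

lemma isBounded_setOf_mapsTo_closedBall {S : Set E} (hint : (interior S).Nonempty) :
    Bornology.IsBounded
      {q : (E →L[ℝ] F) × F | MapsTo (fun x => q.1 x + q.2) S (closedBall 0 1)} := by
  obtain ⟨x₀, hx₀⟩ := hint
  obtain ⟨ρ, hρ, hball⟩ := nhds_basis_closedBall.mem_iff.1 (mem_interior_iff_mem_nhds.1 hx₀)
  refine ((isBounded_closedBall (x := 0) (r := 2 / ρ)).prod
    (isBounded_closedBall (x := 0) (r := 1 + 2 / ρ * ‖x₀‖))).subset ?_
  rintro ⟨A, v⟩ hq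
  have hA := opNorm_le_of_mapsTo_closedBall hρ (hq.mono_left hball)
  refine ⟨mem_closedBall_zero_iff.2 hA, mem_closedBall_zero_iff.2 ?_⟩
  have hv := mem_closedBall_zero_iff.1 (hq (hball (mem_closedBall_self hρ.le)))
  calc ‖v‖ ≤ ‖A x₀ + v‖ + ‖A x₀‖ := by simpa using norm_sub_le (A x₀ + v) (A x₀)
    _ ≤ 1 + 2 / ρ * ‖x₀‖ := add_le_add hv ((A.le_opNorm x₀).trans (by gcongr))

theorem exists_maxDet_mapsTo_closedBall [FiniteDimensional ℝ E] {S : Set E}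
    (hS : Bornology.IsBounded S) (hint : (interior S).Nonempty) :
    ∃ (A : E →L[ℝ] E) (v : E), A.det ≠ 0 ∧ MapsTo (fun x => A x + v) S (closedBall 0 1) ∧
      ∀ (B : E →L[ℝ] E) (w : E), MapsTo (fun x => B x + w) S (closedBall 0 1) →
        |B.det| ≤ |A.det| := by
  set K := {q : (E →L[ℝ] E) × E | MapsTo (fun x => q.1 x + q.2) S (closedBall 0 1)}
  have hK : IsCompact K := isCompact_of_isClosed_isBounded
    (isClosed_setOf_mapsTo_closedBall S) (isBounded_setOf_mapsTo_closedBall hint)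
  obtain ⟨R, hR, hSR⟩ := hS.subset_closedBall_lt 0 0
  have hshrink : ((R⁻¹ • ContinuousLinearMap.id ℝ E, 0) : (E →L[ℝ] E) × E) ∈ K := by
    intro x hx
    have := mem_closedBall_zero_iff.1 (hSR hx)
    simp [norm_smul, abs_of_pos hR, inv_mul_le_one₀ hR, this]
  obtain ⟨⟨A, v⟩, hAv, hmax⟩ := hK.exists_isMaxOn ⟨_, hshrink⟩
    (ContinuousLinearMap.continuous_det.comp continuous_fst).abs.continuousOn
  have hdet : 0 < |A.det| := (hmax hshrink).trans_lt' (by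
    simp [ContinuousLinearMap.det, LinearMap.det_smul, hR.ne'])
  exact ⟨A, v, abs_pos.1 hdet, hAv, fun B w hBw => hmax (a := (B, w)) hBw⟩

end MaxDet

theorem exists_affineEquiv_closedBall_subset_image_subset_closedBall
    {E : Type*} [NormedAddCommGroup E] [InnerProductSpace ℝ E] [FiniteDimensional ℝ E]
    {S : Set E} (hS : IsCompact S) (hconv : Convex ℝ S) (hint : (interior S).Nonempty) :
    ∃ M : E ≃ᵃ[ℝ] E, closedBall 0 (finrank ℝ E : ℝ)⁻¹ ⊆ M '' S ∧ M '' S ⊆ closedBall 0 1 := by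
  obtain ⟨A, v, hdet, hAv, hmax⟩ := exists_maxDet_mapsTo_closedBall hS.isBounded hint
  let M : E ≃ᵃ[ℝ] E :=
    (A.toContinuousLinearEquivOfDetNeZero hdet).toLinearEquiv.toAffineEquiv.trans
      (AffineEquiv.constVAdd ℝ E v)
  have hM : ∀ x, M x = A x + v := fun x => by simp [M, add_comm]
  have hMS : M '' S ⊆ closedBall 0 1 := by
    rintro _ ⟨x, hx, rfl⟩
    rw [hM]
    exact hAv hx
  refine ⟨M, closedBall_inv_finrank_subset (hconv.affine_image M.toAffineMap)
    (hS.image M.toAffineMap.continuous_of_finiteDimensional).isClosed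
    (hint.mono interior_subset |>.image M) hMS fun B w hBw => ?_, hMS⟩
  have hcomp : MapsTo (fun x => (B.comp A) x + (B v + w)) S (closedBall 0 1) := fun x hx => by
    simpa [hM, add_assoc] using hBw (mem_image_of_mem M hx)
  have := hmax _ _ hcomp
  rw [ContinuousLinearMap.det, ContinuousLinearMap.toLinearMap_comp, LinearMap.det_comp,
    abs_mul] at this
  exact (mul_le_iff_le_one_left (abs_pos.2 hdet)).1 this

theorem exists_affineEquiv_closedBall_subset_preimage_subset_closedBall
    {E : Type*} [NormedAddCommGroup E] [InnerProductSpace ℝ E] [FiniteDimensional ℝ E]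
    [Nontrivial E] {S : Set E} (hS : IsCompact S) (hconv : Convex ℝ S)
    (hint : (interior S).Nonempty) :
    ∃ L : E ≃ᵃ[ℝ] E, closedBall 0 1 ⊆ L ⁻¹' S ∧ L ⁻¹' S ⊆ closedBall 0 (finrank ℝ E) := by
  obtain ⟨M, hinner, houter⟩ :=
    exists_affineEquiv_closedBall_subset_image_subset_closedBall hS hconv hint
  have hn : (finrank ℝ E : ℝ) ≠ 0 := Nat.cast_ne_zero.2 finrank_pos.ne'
  let H := AffineEquiv.homothetyUnitsMulHom (0 : E) (Units.mk0 _ hn)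
  have hH : ∀ X, H '' X = (finrank ℝ E : ℝ) • X := fun X => by
    rw [← image_smul]
    exact image_congr fun x _ => by simp [H, AffineMap.homothety_apply]
  have hscale : ∀ r : ℝ, 0 ≤ r →
      (finrank ℝ E : ℝ) • closedBall (0 : E) r = closedBall 0 (finrank ℝ E * r) := fun r hr => by
    simp [_root_.smul_closedBall _ _ hr]
  refine ⟨(M.trans H).symm, ?_, ?_⟩ <;>
    rw [AffineEquiv.preimage_symm, AffineEquiv.coe_trans, image_comp, hH]
  · calc closedBall 0 1 = (finrank ℝ E : ℝ) • closedBall 0 (finrank ℝ E : ℝ)⁻¹ := by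
          rw [hscale _ (by positivity), mul_inv_cancel₀ hn]
      _ ⊆ (finrank ℝ E : ℝ) • (M '' S) := smul_set_mono hinner
  · calc (finrank ℝ E : ℝ) • (M '' S) ⊆ (finrank ℝ E : ℝ) • closedBall 0 1 :=
          smul_set_mono houter
      _ = closedBall 0 (finrank ℝ E) := by rw [hscale _ zero_le_one, mul_one]

/-- John's lemma. -/
theorem stmt_3 (n : ℕ) (S : Set (EuclideanSpace ℝ (Fin n)))
    (hS : IsCompact S) (hconv : Convex ℝ S) (hint : (interior S).Nonempty) :
    ∃ L : EuclideanSpace ℝ (Fin n) ≃ᵃ[ℝ] EuclideanSpace ℝ (Fin n),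
      Metric.closedBall 0 1 ⊆ ⇑L ⁻¹' S ∧ ⇑L ⁻¹' S ⊆ Metric.closedBall 0 n := by
  rcases n.eq_zero_or_pos with rfl | hn
  · obtain ⟨z, hz⟩ := hint
    exact ⟨AffineEquiv.refl ℝ _, fun x _ => Subsingleton.elim z x ▸ interior_subset hz,
      fun x _ => by simp [Subsingleton.elim x 0]⟩
  have : NeZero n := ⟨hn.ne'⟩
  simpa using exists_affineEquiv_closedBall_subset_preimage_subset_closedBall hS hconv hint
end
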